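/- Fix v ∈ ℝ^n and define G_v(x) = (1 + 2⟨x,v⟩ + ‖x‖²‖v‖²)⁻¹ · (x + ‖x‖²·v) on the open set of x ∈ ℝ^n where 1 + 2⟨x,v⟩ + ‖x‖²‖v‖² ≠ 0 (this is the conjugate of the translation x ↦ x + v by the inversion φ̄(x) = x/‖x‖², extended by G_v(0) = 0). Then G_v(0) = 0, the first derivative of G_v at 0 is the identity, and the second derivative of G_v at 0 equals 2Q_v, i.e. D⁽²⁾₀G_v(ξ,η) = 2(⟨ξ,η⟩·v − ⟨ξ,v⟩·η − ⟨η,v⟩·ξ) for all ξ, η ∈ ℝ^n. -/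

import Mathlib

open scoped RealInnerProductSpace

noncomputable section

/-- `ℝ^n` with the Euclidean inner product and norm. -/
abbrev E (n : ℕ) : Type := EuclideanSpace ℝ (Fin n)

/-- The symmetric bilinear map `Q_v(ξ,η) = ⟨ξ,η⟩·v − ⟨ξ,v⟩·η − ⟨η,v⟩·ξ`. -/
def Qv {n : ℕ} (v ξ η : E n) : E n := ⟪ξ, η⟫ • v - ⟪ξ, v⟫ • η - ⟪η, v⟫ • ξ

/-- The germ at `∞` of the translation `x ↦ x + v` of `ℝ^n ⊆ S^n` in the inversion chart
`φ̄(x) = x/‖x‖²`: `G_v(x) = (1 + 2⟨x,v⟩ + ‖x‖²‖v‖²)⁻¹ · (x + ‖x‖²·v)`,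
with `G_v(0) = 0`. -/
def Gv {n : ℕ} (v x : E n) : E n :=
  (1 + 2 * ⟪x, v⟫ + ‖x‖ ^ 2 * ‖v‖ ^ 2)⁻¹ • (x + ‖x‖ ^ 2 • v)

/-!
Write `G_v = c⁻¹ • b` with `c(x) = 1 + 2⟨x,v⟩ + ‖x‖²‖v‖²` and `b(x) = x + ‖x‖²v`. The quotient rule
gives `DG_v(x)η = c(x)⁻¹ Db(x)η − c(x)⁻² (Dc(x)η) b(x)` near `0`. Differentiating once more at `0`,
where `c = 1`, `b = 0` and `Db = id`, leaves
`D²b(ξ,η) − (Dc(0)ξ) η − (Dc(0)η) ξ = 2⟨ξ,η⟩v − 2⟨ξ,v⟩η − 2⟨η,v⟩ξ`.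
-/

open Filter Topology

section SecondDerivative

variable {𝕜 V W : Type*} [NontriviallyNormedField 𝕜] [NormedAddCommGroup V] [NormedSpace 𝕜 V]
  [NormedAddCommGroup W] [NormedSpace 𝕜 W]

theorem iteratedFDeriv_two_apply_of_eventually_hasFDerivAt {f : V → W} {f' : V → V →L[𝕜] W}
    {x₀ : V} (hf : ContDiffAt 𝕜 2 f x₀) (hf' : ∀ᶠ x in 𝓝 x₀, HasFDerivAt f (f' x) x)
    {η : V} {L : V →L[𝕜] W} (hL : HasFDerivAt (fun x => f' x η) L x₀) (ξ : V) :
    iteratedFDeriv 𝕜 2 f x₀ ![ξ, η] = L ξ := by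
  have hfderiv : fderiv 𝕜 f =ᶠ[𝓝 x₀] f' := hf'.mono fun x hx => hx.fderiv
  have hf'_diff : DifferentiableAt 𝕜 f' x₀ :=
    ((hf.fderiv_right (m := 1) le_rfl).differentiableAt one_ne_zero).congr_of_eventuallyEq
      hfderiv.symm
  have happly : HasFDerivAt (fun x => f' x η)
      ((ContinuousLinearMap.apply 𝕜 W η).comp (fderiv 𝕜 f' x₀)) x₀ :=
    (ContinuousLinearMap.apply 𝕜 W η).hasFDerivAt.comp x₀ hf'_diff.hasFDerivAt
  rw [iteratedFDeriv_two_apply, hfderiv.fderiv_eq, ← happly.unique hL]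
  rfl

end SecondDerivative

theorem hasFDerivAt_inner_const {V : Type*} [NormedAddCommGroup V] [InnerProductSpace ℝ V]
    (w x : V) : HasFDerivAt (fun y => ⟪y, w⟫) (innerSL ℝ w) x := by
  simpa only [coe_innerSL_apply, real_inner_comm w] using (innerSL ℝ w).hasFDerivAt (x := x)

namespace Gv

section Formulas

variable {V : Type*} [NormedAddCommGroup V] [InnerProductSpace ℝ V]

def denom (v x : V) : ℝ := 1 + 2 * ⟪x, v⟫ + ‖x‖ ^ 2 * ‖v‖ ^ 2

def numer (v x : V) : V := x + ‖x‖ ^ 2 • v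

@[simp] theorem denom_zero (v : V) : denom v 0 = 1 := by simp [denom]

@[simp] theorem numer_zero (v : V) : numer v 0 = 0 := by simp [numer]

theorem hasFDerivAt_denom (v x : V) :
    HasFDerivAt (denom v) ((2 : ℝ) • innerSL ℝ v + ‖v‖ ^ 2 • 2 • innerSL ℝ x) x :=
  (((hasFDerivAt_inner_const v x).const_mul (2 : ℝ)).const_add 1).add
    ((hasStrictFDerivAt_norm_sq x).hasFDerivAt.mul_const _)

theorem hasFDerivAt_numer (v x : V) :
    HasFDerivAt (numer v) (.id ℝ V + (2 • innerSL ℝ x).smulRight v) x :=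
  (hasFDerivAt_id x).add ((hasStrictFDerivAt_norm_sq x).hasFDerivAt.smul_const v)

theorem hasFDerivAt_inv_denom (v x : V) (hx : denom v x ≠ 0) :
    HasFDerivAt (fun y => (denom v y)⁻¹)
      (-(denom v x ^ 2)⁻¹ • ((2 : ℝ) • innerSL ℝ v + ‖v‖ ^ 2 • 2 • innerSL ℝ x)) x :=
  (hasDerivAt_inv hx).comp_hasFDerivAt x (hasFDerivAt_denom v x)

def derivAt (v x : V) : V →L[ℝ] V :=
  (denom v x)⁻¹ • (.id ℝ V + (2 • innerSL ℝ x).smulRight v) +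
    (-(denom v x ^ 2)⁻¹ • ((2 : ℝ) • innerSL ℝ v + ‖v‖ ^ 2 • 2 • innerSL ℝ x)).smulRight
      (numer v x)

@[simp] theorem derivAt_zero (v : V) : derivAt v 0 = .id ℝ V := by
  ext
  simp [derivAt]

theorem derivAt_apply (v x η : V) :
    derivAt v x η = (denom v x)⁻¹ • (η + (2 * ⟪x, η⟫) • v) +
      (-(denom v x ^ 2)⁻¹ * (2 * ⟪η, v⟫ + ‖v‖ ^ 2 * (2 * ⟪x, η⟫))) • numer v x := by
  simp [derivAt, real_inner_comm v]
  module

end Formulas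

variable {n : ℕ}

theorem eq_inv_denom_smul_numer (v : E n) : Gv v = fun x => (denom v x)⁻¹ • numer v x := rfl

theorem hasFDerivAt (v x : E n) (hx : denom v x ≠ 0) : HasFDerivAt (Gv v) (derivAt v x) x :=
  (hasFDerivAt_inv_denom v x hx).smul (hasFDerivAt_numer v x)

theorem eventually_hasFDerivAt (v : E n) : ∀ᶠ x in 𝓝 0, HasFDerivAt (Gv v) (derivAt v x) x :=
  ((hasFDerivAt_denom v 0).continuousAt.eventually_ne (by simp)).mono (hasFDerivAt v)

theorem contDiffAt_zero (v : E n) : ContDiffAt ℝ 2 (Gv v) 0 := by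
  have hinner : ContDiffAt ℝ 2 (fun x : E n => ⟪x, v⟫) 0 := contDiffAt_id.inner ℝ contDiffAt_const
  have hnormSq : ContDiffAt ℝ 2 (fun x : E n => ‖x‖ ^ 2) 0 := (contDiff_norm_sq ℝ).contDiffAt
  rw [eq_inv_denom_smul_numer]
  unfold denom numer
  fun_prop (disch := simp)

theorem iteratedFDeriv_two_zero (v ξ η : E n) :
    iteratedFDeriv ℝ 2 (Gv v) 0 ![ξ, η] = (2 : ℝ) • Qv v ξ η := by
  have hN : HasFDerivAt (fun x : E n => η + (2 * ⟪x, η⟫) • v)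
      (((2 : ℝ) • innerSL ℝ η).smulRight v) 0 :=
    (((hasFDerivAt_inner_const η 0).const_mul 2).smul_const v).const_add η
  have hcoef : DifferentiableAt ℝ
      (fun x : E n => -(denom v x ^ 2)⁻¹ * (2 * ⟪η, v⟫ + ‖v‖ ^ 2 * (2 * ⟪x, η⟫))) 0 :=
    (((hasFDerivAt_denom v 0).differentiableAt.pow 2).inv (by simp)).neg.mul
      ((((hasFDerivAt_inner_const η 0).differentiableAt.const_mul 2).const_mul _).const_add _)
  have hL := (((hasFDerivAt_inv_denom v 0 (by simp)).smul hN).add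
    (hcoef.hasFDerivAt.smul (hasFDerivAt_numer v 0))).congr_of_eventuallyEq
    (.of_forall (derivAt_apply v · η))
  rw [iteratedFDeriv_two_apply_of_eventually_hasFDerivAt (contDiffAt_zero v)
    (eventually_hasFDerivAt v) hL]
  simp only [denom_zero, inv_one, one_smul, one_pow, map_zero, smul_zero, add_zero,
    neg_smul, inner_zero_left, mul_zero, zero_smul, neg_mul, one_mul,
    ContinuousLinearMap.zero_smulRight, numer_zero, ContinuousLinearMap.smulRight_zero,
    add_apply, ContinuousLinearMap.smulRight_apply,
    smul_apply, coe_innerSL_apply, smul_eq_mul, neg_apply,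
    ContinuousLinearMap.id_apply, Qv]
  rw [real_inner_comm η ξ, real_inner_comm v ξ]
  module

end Gv

/-- Equation (1) of the paper: `G_v(0) = 0`, the first derivative of `G_v`
at `0` is the identity, and the second derivative of `G_v` at `0` equals `2Q_v`. -/
theorem stmt18 {n : ℕ} (v : E n) :
    Gv v 0 = 0 ∧
    fderiv ℝ (Gv v) 0 = ContinuousLinearMap.id ℝ (E n) ∧
    ∀ ξ η : E n, iteratedFDeriv ℝ 2 (Gv v) 0 ![ξ, η] = (2 : ℝ) • Qv v ξ η :=
  ⟨by simp [Gv], by simp [(Gv.hasFDerivAt v 0 (by simp)).fderiv], Gv.iteratedFDeriv_two_zero v⟩
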